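/- arXiv:0801.1251 — 2 statements merged into one kernel-verified Lean document; each statement's English description precedes it below -/
import Mathlib

section
/- For any type τ, suppose ⟨⟨a⟩⟩v and ⟨⟨a'⟩⟩v' are closed atom-binding values with atom(a,v,a',v') ⊆ w, ∅ ⊢ ⟨⟨a⟩⟩v : τ bnd and ∅ ⊢ ⟨⟨a'⟩⟩v' : τ bnd. If for some atom a'' ∉ w one has ⊢_{w∪{a''}} v[a:=a''] ≅ v'[a':=a''] : τ, then ⊢_w ⟨⟨a⟩⟩v ≅ ⟨⟨a'⟩⟩v' : τ bnd. -/
set_option autoImplicit true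

/-! ## Atoms and variables -/

abbrev Atom : Type := ℕ

/-! ## Types over a set of data type symbols -/

inductive Ty (D : Type) : Type where
  | unit : Ty D
  | prod : Ty D → Ty D → Ty D
  | arrow : Ty D → Ty D → Ty D
  | data : D → Ty D
  | atm : Ty D
  | bnd : Ty D → Ty D

/-! ## Signatures: data types, constructors and observations -/

structure Sig : Type 1 where
  D : Type
  C : Type
  O : Type
  [finD : Fintype D]
  [finC : Fintype C]
  [finO : Fintype O]
  natD : D
  argTy : C → Ty D
  resTy : C → D
  zeroC : C
  succC : C
  zeroArg : argTy zeroC = Ty.unit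
  zeroRes : resTy zeroC = natD
  succArg : argTy succC = Ty.data natD
  succRes : resTy succC = natD
  arity : O → ℕ
  obsVal : O → List Atom → List Atom → ℕ
  eqO : O
  eqArity : arity eqO = 2
  eqSem : ∀ (s : List Atom) (a b : Atom),
    obsVal eqO s [a, b] = if a = b then 0 else 1

attribute [instance] Sig.finD Sig.finC Sig.finO

/-! ## Terms (de Bruijn representation; values are a sub-grammar cut out by `IsVal`) -/

inductive Tm (σ : Sig) : Type where
  | var : ℕ → Tm σ
  | unit : Tm σ
  | pair : Tm σ → Tm σ → Tm σ
  | fn : Tm σ → Tm σ          -- fun(f x = e); de Bruijn: var 0 = x, var 1 = f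
  | con : σ.C → Tm σ → Tm σ
  | atom : Atom → Tm σ
  | bindv : Tm σ → Tm σ → Tm σ -- atom binding ⟨⟨v₁⟩⟩v₂
  | lett : Tm σ → Tm σ → Tm σ  -- let x = e₁ in e₂; binds var 0 in e₂
  | fst : Tm σ → Tm σ
  | snd : Tm σ → Tm σ
  | app : Tm σ → Tm σ → Tm σ
  | case : Tm σ → (σ.C → Tm σ) → Tm σ -- match; each branch binds var 0
  | fresh : Tm σ
  | unbind : Tm σ → Tm σ
  | obs : (o : σ.O) → (Fin (σ.arity o) → Tm σ) → Tm σ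

inductive IsVal {σ : Sig} : Tm σ → Prop where
  | var : IsVal (Tm.var n)
  | unit : IsVal Tm.unit
  | pair : IsVal v₁ → IsVal v₂ → IsVal (Tm.pair v₁ v₂)
  | fn : IsVal (Tm.fn e)
  | con : IsVal v → IsVal (Tm.con c v)
  | atom : IsVal (Tm.atom a)
  | bindv : IsVal v₁ → IsVal v₂ → IsVal (Tm.bindv v₁ v₂)

/-! ## Renaming and substitution of variables -/

def upr (r : ℕ → ℕ) : ℕ → ℕ
  | 0 => 0
  | n + 1 => r n + 1

namespace Tm

variable {σ : Sig}

def renV : Tm σ → (ℕ → ℕ) → Tm σ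
  | .var n, r => .var (r n)
  | .unit, _ => .unit
  | .pair t₁ t₂, r => .pair (renV t₁ r) (renV t₂ r)
  | .fn e, r => .fn (renV e (upr (upr r)))
  | .con c t, r => .con c (renV t r)
  | .atom a, _ => .atom a
  | .bindv t₁ t₂, r => .bindv (renV t₁ r) (renV t₂ r)
  | .lett e₁ e₂, r => .lett (renV e₁ r) (renV e₂ (upr r))
  | .fst t, r => .fst (renV t r)
  | .snd t, r => .snd (renV t r)
  | .app t₁ t₂, r => .app (renV t₁ r) (renV t₂ r)
  | .case t br, r => .case (renV t r) (fun c => renV (br c) (upr r))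
  | .fresh, _ => .fresh
  | .unbind t, r => .unbind (renV t r)
  | .obs o args, r => .obs o (fun i => renV (args i) r)

def ups (ρ : ℕ → Tm σ) : ℕ → Tm σ
  | 0 => .var 0
  | n + 1 => renV (ρ n) Nat.succ

def subst : Tm σ → (ℕ → Tm σ) → Tm σ
  | .var n, ρ => ρ n
  | .unit, _ => .unit
  | .pair t₁ t₂, ρ => .pair (subst t₁ ρ) (subst t₂ ρ)
  | .fn e, ρ => .fn (subst e (ups (ups ρ)))
  | .con c t, ρ => .con c (subst t ρ)
  | .atom a, _ => .atom a
  | .bindv t₁ t₂, ρ => .bindv (subst t₁ ρ) (subst t₂ ρ)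
  | .lett e₁ e₂, ρ => .lett (subst e₁ ρ) (subst e₂ (ups ρ))
  | .fst t, ρ => .fst (subst t ρ)
  | .snd t, ρ => .snd (subst t ρ)
  | .app t₁ t₂, ρ => .app (subst t₁ ρ) (subst t₂ ρ)
  | .case t br, ρ => .case (subst t ρ) (fun c => subst (br c) (ups ρ))
  | .fresh, _ => .fresh
  | .unbind t, ρ => .unbind (subst t ρ)
  | .obs o args, ρ => .obs o (fun i => subst (args i) ρ)

/-- The substitution [v/x₀]. -/
def cons1 (v : Tm σ) : ℕ → Tm σ
  | 0 => v
  | n + 1 => .var n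

/-- The substitution [v/x₀, f/x₁]. -/
def cons2 (v f : Tm σ) : ℕ → Tm σ
  | 0 => v
  | 1 => f
  | n + 2 => .var n

/-- e[v/x] (single capture-avoiding substitution for the last-bound variable). -/
def subst1 (e v : Tm σ) : Tm σ := subst e (cons1 v)

/-- e[v/x, f/f'] (used for function application). -/
def subst2 (e v f : Tm σ) : Tm σ := subst e (cons2 v f)

/-! ## Atoms of a term, renaming/permuting atoms, observation symbols -/

def atoms : Tm σ → Finset Atom
  | .var _ => ∅
  | .unit => ∅
  | .pair t₁ t₂ => atoms t₁ ∪ atoms t₂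
  | .fn e => atoms e
  | .con _ t => atoms t
  | .atom a => {a}
  | .bindv t₁ t₂ => atoms t₁ ∪ atoms t₂
  | .lett e₁ e₂ => atoms e₁ ∪ atoms e₂
  | .fst t => atoms t
  | .snd t => atoms t
  | .app t₁ t₂ => atoms t₁ ∪ atoms t₂
  | .case t br => atoms t ∪ Finset.univ.biUnion (fun c => atoms (br c))
  | .fresh => ∅
  | .unbind t => atoms t
  | .obs _ args => Finset.univ.biUnion (fun i => atoms (args i))

def mapAtoms : Tm σ → (Atom → Atom) → Tm σ
  | .var n, _ => .var n
  | .unit, _ => .unit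
  | .pair t₁ t₂, f => .pair (mapAtoms t₁ f) (mapAtoms t₂ f)
  | .fn e, f => .fn (mapAtoms e f)
  | .con c t, f => .con c (mapAtoms t f)
  | .atom a, f => .atom (f a)
  | .bindv t₁ t₂, f => .bindv (mapAtoms t₁ f) (mapAtoms t₂ f)
  | .lett e₁ e₂, f => .lett (mapAtoms e₁ f) (mapAtoms e₂ f)
  | .fst t, f => .fst (mapAtoms t f)
  | .snd t, f => .snd (mapAtoms t f)
  | .app t₁ t₂, f => .app (mapAtoms t₁ f) (mapAtoms t₂ f)
  | .case t br, f => .case (mapAtoms t f) (fun c => mapAtoms (br c) f)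
  | .fresh, _ => .fresh
  | .unbind t, f => .unbind (mapAtoms t f)
  | .obs o args, f => .obs o (fun i => mapAtoms (args i) f)

/-- v[a := a'] : rename all occurrences of atom a to a'. -/
def renameAtom (t : Tm σ) (a a' : Atom) : Tm σ :=
  t.mapAtoms (fun b => if b = a then a' else b)

def obsSyms : Tm σ → Set σ.O
  | .var _ => ∅
  | .unit => ∅
  | .pair t₁ t₂ => obsSyms t₁ ∪ obsSyms t₂
  | .fn e => obsSyms e
  | .con _ t => obsSyms t
  | .atom _ => ∅
  | .bindv t₁ t₂ => obsSyms t₁ ∪ obsSyms t₂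
  | .lett e₁ e₂ => obsSyms e₁ ∪ obsSyms e₂
  | .fst t => obsSyms t
  | .snd t => obsSyms t
  | .app t₁ t₂ => obsSyms t₁ ∪ obsSyms t₂
  | .case t br => obsSyms t ∪ ⋃ c, obsSyms (br c)
  | .fresh => ∅
  | .unbind t => obsSyms t
  | .obs o args => insert o (⋃ i, obsSyms (args i))

end Tm

/-! ## Frame stacks -/

inductive Stk (σ : Sig) : Type where
  | id : Stk σ
  | cons : Stk σ → Tm σ → Stk σ  -- S∘(x.e); e binds var 0

namespace Stk

variable {σ : Sig}

def atoms : Stk σ → Finset Atom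
  | .id => ∅
  | .cons S e => atoms S ∪ e.atoms

def obsSyms : Stk σ → Set σ.O
  | .id => ∅
  | .cons S e => obsSyms S ∪ e.obsSyms

def mapAtoms : Stk σ → (Atom → Atom) → Stk σ
  | .id, _ => .id
  | .cons S e, f => .cons (mapAtoms S f) (e.mapAtoms f)

/-- S[e]: Id[e] = e, (S∘(x.e'))[e] = S[let x = e in e']. -/
def fill : Stk σ → Tm σ → Tm σ
  | .id, e => e
  | .cons S e', e => fill S (Tm.lett e e')

end Stk

/-! ## Numerals -/

def numeral (σ : Sig) : ℕ → Tm σ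
  | 0 => Tm.con σ.zeroC Tm.unit
  | n + 1 => Tm.con σ.succC (numeral σ n)

/-! ## Configurations -/

structure Config (σ : Sig) : Type where
  st : List Atom
  stk : Stk σ
  tm : Tm σ

/-! ## Typing -/

inductive HasTy (σ : Sig) : List (Ty σ.D) → Tm σ → Ty σ.D → Prop where
  | var (Γ : List (Ty σ.D)) (n : ℕ) (τ : Ty σ.D) :
      Γ[n]? = some τ → HasTy σ Γ (Tm.var n) τ
  | unit : HasTy σ Γ Tm.unit Ty.unit
  | pair : IsVal v₁ → IsVal v₂ → HasTy σ Γ v₁ τ₁ → HasTy σ Γ v₂ τ₂ →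
      HasTy σ Γ (Tm.pair v₁ v₂) (Ty.prod τ₁ τ₂)
  | fn : HasTy σ (τ :: Ty.arrow τ τ' :: Γ) e τ' →
      HasTy σ Γ (Tm.fn e) (Ty.arrow τ τ')
  | con : IsVal v → HasTy σ Γ v (σ.argTy c) →
      HasTy σ Γ (Tm.con c v) (Ty.data (σ.resTy c))
  | atom : HasTy σ Γ (Tm.atom a) Ty.atm
  | bindv : IsVal v₁ → IsVal v₂ → HasTy σ Γ v₁ Ty.atm → HasTy σ Γ v₂ τ →
      HasTy σ Γ (Tm.bindv v₁ v₂) (Ty.bnd τ)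
  | lett : HasTy σ Γ e₁ τ → HasTy σ (τ :: Γ) e₂ τ' →
      HasTy σ Γ (Tm.lett e₁ e₂) τ'
  | fst : IsVal v → HasTy σ Γ v (Ty.prod τ₁ τ₂) → HasTy σ Γ (Tm.fst v) τ₁
  | snd : IsVal v → HasTy σ Γ v (Ty.prod τ₁ τ₂) → HasTy σ Γ (Tm.snd v) τ₂
  | app : IsVal v₁ → IsVal v₂ → HasTy σ Γ v₁ (Ty.arrow τ τ') → HasTy σ Γ v₂ τ →
      HasTy σ Γ (Tm.app v₁ v₂) τ'
  | case (br : σ.C → Tm σ) : IsVal v → HasTy σ Γ v (Ty.data δ) →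
      (∀ c, σ.resTy c = δ → HasTy σ (σ.argTy c :: Γ) (br c) τ) →
      HasTy σ Γ (Tm.case v br) τ
  | fresh : HasTy σ Γ Tm.fresh Ty.atm
  | unbind : IsVal v → HasTy σ Γ v (Ty.bnd τ) →
      HasTy σ Γ (Tm.unbind v) (Ty.prod Ty.atm τ)
  | obs (o : σ.O) (args : Fin (σ.arity o) → Tm σ) :
      (∀ i, IsVal (args i)) → (∀ i, HasTy σ Γ (args i) Ty.atm) →
      HasTy σ Γ (Tm.obs o args) (Ty.data σ.natD)

inductive HasTyStk (σ : Sig) : List (Ty σ.D) → Stk σ → Ty σ.D → Ty σ.D → Prop where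
  | id : HasTyStk σ Γ Stk.id τ τ
  | cons : HasTy σ (τ :: Γ) e τ' → HasTyStk σ Γ S τ' τ'' →
      HasTyStk σ Γ (Stk.cons S e) τ τ''

/-! ## The transition relation -/

inductive Step (σ : Sig) : Config σ → Config σ → Prop where
  | pop : IsVal v →
      Step σ ⟨s, Stk.cons S e, v⟩ ⟨s, S, e.subst1 v⟩
  | lett :
      Step σ ⟨s, S, Tm.lett e₁ e₂⟩ ⟨s, Stk.cons S e₂, e₁⟩
  | case (br : σ.C → Tm σ) : IsVal v →
      Step σ ⟨s, S, Tm.case (Tm.con c v) br⟩ ⟨s, S, (br c).subst1 v⟩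
  | fst : IsVal v₁ → IsVal v₂ →
      Step σ ⟨s, S, Tm.fst (Tm.pair v₁ v₂)⟩ ⟨s, S, v₁⟩
  | snd : IsVal v₁ → IsVal v₂ →
      Step σ ⟨s, S, Tm.snd (Tm.pair v₁ v₂)⟩ ⟨s, S, v₂⟩
  | app : IsVal v →
      Step σ ⟨s, S, Tm.app (Tm.fn e) v⟩ ⟨s, S, e.subst2 v (Tm.fn e)⟩
  | fresh : a' ∉ s →
      Step σ ⟨s, S, Tm.fresh⟩ ⟨s ++ [a'], S, Tm.atom a'⟩
  | unbind : a' ∉ s → IsVal v →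
      Step σ ⟨s, S, Tm.unbind (Tm.bindv (Tm.atom a) v)⟩
             ⟨s ++ [a'], S, Tm.pair (Tm.atom a') (v.renameAtom a a')⟩
  | obs (o : σ.O) (as : Fin (σ.arity o) → Atom) :
      (∀ i, as i ∈ s) →
      Step σ ⟨s, S, Tm.obs o (fun i => Tm.atom (as i))⟩
             ⟨s, S, numeral σ (σ.obsVal o s (List.ofFn as))⟩

/-! ## Termination -/

inductive TermN (σ : Sig) : Config σ → ℕ → Prop where
  | val : IsVal v → TermN σ ⟨s, Stk.id, v⟩ 0
  | step : Step σ c c' → TermN σ c' n → TermN σ c (n + 1)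

def Term (σ : Sig) (c : Config σ) : Prop := ∃ n, TermN σ c n

/-! ## Equivariance and affineness of observations -/

def ObsEquivariant (σ : Sig) : Prop :=
  ∀ (π : Equiv.Perm Atom), {a : Atom | π a ≠ a}.Finite →
    ∀ (o : σ.O) (s as : List Atom),
      s.Nodup → as.length = σ.arity o → (∀ a ∈ as, a ∈ s) →
      σ.obsVal o s as = σ.obsVal o (s.map ⇑π) (as.map ⇑π)

def AffineObs (σ : Sig) (o : σ.O) : Prop :=
  ∀ (s : List Atom) (a' : Atom) (as : List Atom),
    s.Nodup → a' ∉ s → as.length = σ.arity o → (∀ a ∈ as, a ∈ s) →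
    σ.obsVal o (a' :: s) as = σ.obsVal o s as

/-! ## Operational equivalence of closed expressions, and contextual equivalence -/

def OpEq (σ : Sig) (w : Finset Atom) (e e' : Tm σ) (τ : Ty σ.D) : Prop :=
  e.atoms ∪ e'.atoms ⊆ w ∧ HasTy σ [] e τ ∧ HasTy σ [] e' τ ∧
  ∀ (s : List Atom) (S : Stk σ) (τ' : Ty σ.D),
    s.Nodup → w ∪ S.atoms ⊆ s.toFinset → HasTyStk σ [] S τ τ' →
    (Term σ ⟨s, S, e⟩ ↔ Term σ ⟨s, S, e'⟩)

/-- A closing substitution for context Γ with atoms in w. -/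
def ClosingSubst (σ : Sig) (Γ : List (Ty σ.D)) (w : Finset Atom) (vs : ℕ → Tm σ) : Prop :=
  ∀ i τ, Γ[i]? = some τ → IsVal (vs i) ∧ HasTy σ [] (vs i) τ ∧ (vs i).atoms ⊆ w

def CtxEq (σ : Sig) (Γ : List (Ty σ.D)) (w : Finset Atom) (e e' : Tm σ) (τ : Ty σ.D) : Prop :=
  e.atoms ∪ e'.atoms ⊆ w ∧ HasTy σ Γ e τ ∧ HasTy σ Γ e' τ ∧
  ∀ (w' : Finset Atom) (vs : ℕ → Tm σ), w ⊆ w' → ClosingSubst σ Γ w' vs →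
    OpEq σ w' (e.subst vs) (e'.subst vs) τ

/-! ## Expression relations -/

def ExprRel (σ : Sig) : Type :=
  List (Ty σ.D) → Finset Atom → Tm σ → Tm σ → Ty σ.D → Prop

def IsExprRel (σ : Sig) (R : ExprRel σ) : Prop :=
  ∀ Γ w e e' τ, R Γ w e e' τ →
    e.atoms ∪ e'.atoms ⊆ w ∧ HasTy σ Γ e τ ∧ HasTy σ Γ e' τ

/-- Compatible refinement ℰ̂ of an expression relation ℰ. -/
inductive CompRef (σ : Sig) (R : ExprRel σ) :
    List (Ty σ.D) → Finset Atom → Tm σ → Tm σ → Ty σ.D → Prop where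
  | var (Γ : List (Ty σ.D)) (n : ℕ) (τ : Ty σ.D) :
      Γ[n]? = some τ → CompRef σ R Γ w (Tm.var n) (Tm.var n) τ
  | unit : CompRef σ R Γ w Tm.unit Tm.unit Ty.unit
  | pair : IsVal v₁ → IsVal v₂ → IsVal v₁' → IsVal v₂' →
      R Γ w v₁ v₁' τ₁ → R Γ w v₂ v₂' τ₂ →
      CompRef σ R Γ w (Tm.pair v₁ v₂) (Tm.pair v₁' v₂') (Ty.prod τ₁ τ₂)
  | fn : R (τ :: Ty.arrow τ τ' :: Γ) w e e' τ' →
      CompRef σ R Γ w (Tm.fn e) (Tm.fn e') (Ty.arrow τ τ')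
  | con : IsVal v → IsVal v' → R Γ w v v' (σ.argTy c) →
      CompRef σ R Γ w (Tm.con c v) (Tm.con c v') (Ty.data (σ.resTy c))
  | atom : a ∈ w → CompRef σ R Γ w (Tm.atom a) (Tm.atom a) Ty.atm
  | bindv : IsVal v₁ → IsVal v₂ → IsVal v₁' → IsVal v₂' →
      R Γ w v₁ v₁' Ty.atm → R Γ w v₂ v₂' τ →
      CompRef σ R Γ w (Tm.bindv v₁ v₂) (Tm.bindv v₁' v₂') (Ty.bnd τ)
  | lett : R Γ w e₁ e₁' τ → R (τ :: Γ) w e₂ e₂' τ' →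
      CompRef σ R Γ w (Tm.lett e₁ e₂) (Tm.lett e₁' e₂') τ'
  | fst : IsVal v → IsVal v' → R Γ w v v' (Ty.prod τ₁ τ₂) →
      CompRef σ R Γ w (Tm.fst v) (Tm.fst v') τ₁
  | snd : IsVal v → IsVal v' → R Γ w v v' (Ty.prod τ₁ τ₂) →
      CompRef σ R Γ w (Tm.snd v) (Tm.snd v') τ₂
  | app : IsVal v₁ → IsVal v₂ → IsVal v₁' → IsVal v₂' →
      R Γ w v₁ v₁' (Ty.arrow τ τ') → R Γ w v₂ v₂' τ →
      CompRef σ R Γ w (Tm.app v₁ v₂) (Tm.app v₁' v₂') τ'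
  | case (br br' : σ.C → Tm σ) : IsVal v → IsVal v' → R Γ w v v' (Ty.data δ) →
      (∀ c, σ.resTy c = δ → R (σ.argTy c :: Γ) w (br c) (br' c) τ) →
      CompRef σ R Γ w (Tm.case v br) (Tm.case v' br') τ
  | fresh : CompRef σ R Γ w Tm.fresh Tm.fresh Ty.atm
  | unbind : IsVal v → IsVal v' → R Γ w v v' (Ty.bnd τ) →
      CompRef σ R Γ w (Tm.unbind v) (Tm.unbind v') (Ty.prod Ty.atm τ)
  | obs (o : σ.O) (args args' : Fin (σ.arity o) → Tm σ) :
      (∀ i, IsVal (args i)) → (∀ i, IsVal (args' i)) →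
      (∀ i, R Γ w (args i) (args' i) Ty.atm) →
      CompRef σ R Γ w (Tm.obs o args) (Tm.obs o args') (Ty.data σ.natD)

/-- Compatible refinement extended to frame stacks. -/
inductive StkRef (σ : Sig) (R : ExprRel σ) :
    List (Ty σ.D) → Finset Atom → Stk σ → Stk σ → Ty σ.D → Ty σ.D → Prop where
  | id : StkRef σ R Γ w Stk.id Stk.id τ τ
  | cons : R (τ :: Γ) w e e' τ' → StkRef σ R Γ w S S' τ' τ'' →
      StkRef σ R Γ w (Stk.cons S e) (Stk.cons S' e') τ τ''

/-! ## Properties of expression relations -/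

def RelRefl (σ : Sig) (R : ExprRel σ) : Prop :=
  ∀ Γ w (e : Tm σ) τ, e.atoms ⊆ w → HasTy σ Γ e τ → R Γ w e e τ

def RelSymm (σ : Sig) (R : ExprRel σ) : Prop :=
  ∀ Γ w e e' τ, R Γ w e e' τ → R Γ w e' e τ

def RelTrans (σ : Sig) (R : ExprRel σ) : Prop :=
  ∀ Γ w e e' e'' τ, R Γ w e e' τ → R Γ w e' e'' τ → R Γ w e e'' τ

def RelCompat (σ : Sig) (R : ExprRel σ) : Prop :=
  ∀ Γ w e e' τ, CompRef σ R Γ w e e' τ → R Γ w e e' τ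

def RelSubst (σ : Sig) (R : ExprRel σ) : Prop :=
  ∀ Γ w (v v' : Tm σ) τ e e' τ', IsVal v → IsVal v' →
    R Γ w v v' τ → R (τ :: Γ) w e e' τ' →
    R Γ w (e.subst1 v) (e'.subst1 v') τ'

def RelEquivariant (σ : Sig) (R : ExprRel σ) : Prop :=
  ∀ (π : Equiv.Perm Atom), {a : Atom | π a ≠ a}.Finite →
    ∀ Γ w (e e' : Tm σ) τ, R Γ w e e' τ →
      R Γ (w.image ⇑π) (e.mapAtoms ⇑π) (e'.mapAtoms ⇑π) τ

def RelAdequate (σ : Sig) (R : ExprRel σ) : Prop :=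
  ∀ w e e' τ, R [] w e e' τ → OpEq σ w e e' τ

/-! ## The Howe relation (least relation closed under the Howe rule) -/

def Howe (σ : Sig) : ExprRel σ := fun Γ w e e'' τ =>
  ∀ R : ExprRel σ,
    (∀ Γ' w' a c τ',
      (∃ b, CompRef σ R Γ' w' a b τ' ∧ CtxEq σ Γ' w' b c τ') → R Γ' w' a c τ') →
    R Γ w e e'' τ

/-! ## Nominal arities and α-equivalence -/

inductive NominalArity (σ : Sig) : Ty σ.D → Prop where
  | unit : NominalArity σ Ty.unit
  | prod : NominalArity σ t₁ → NominalArity σ t₂ → NominalArity σ (Ty.prod t₁ t₂)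
  | data (d : σ.D) : NominalArity σ (Ty.data d)
  | atm : NominalArity σ Ty.atm
  | bnd : NominalArity σ t → NominalArity σ (Ty.bnd t)

inductive AlphaEq (σ : Sig) : Finset Atom → Tm σ → Tm σ → Ty σ.D → Prop where
  | unit : AlphaEq σ w Tm.unit Tm.unit Ty.unit
  | pair : AlphaEq σ w v₁ v₁' a₁ → AlphaEq σ w v₂ v₂' a₂ →
      AlphaEq σ w (Tm.pair v₁ v₂) (Tm.pair v₁' v₂') (Ty.prod a₁ a₂)
  | con : AlphaEq σ w v v' (σ.argTy c) →
      AlphaEq σ w (Tm.con c v) (Tm.con c v') (Ty.data (σ.resTy c))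
  | atom : a ∈ w → AlphaEq σ w (Tm.atom a) (Tm.atom a) Ty.atm
  | bindv (a a' a'' : Atom) (v v' : Tm σ) : a'' ∉ w →
      insert a (insert a' (v.atoms ∪ v'.atoms)) ⊆ w →
      AlphaEq σ (insert a'' w) (v.renameAtom a a'') (v'.renameAtom a' a'') ar →
      AlphaEq σ w (Tm.bindv (Tm.atom a) v) (Tm.bindv (Tm.atom a') v') (Ty.bnd ar)

/-! ## Well-typed configurations -/

def ConfigTy (σ : Sig) (w : Finset Atom) (c : Config σ) (τ : Ty σ.D) : Prop :=
  c.st.Nodup ∧ c.stk.atoms ∪ c.tm.atoms ⊆ c.st.toFinset ∧ c.st.toFinset = w ∧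
  ∃ τ', HasTyStk σ [] c.stk τ' τ ∧ HasTy σ [] c.tm τ'

/-!
The argument is Howe-style. Call closed values `⟨⟨x⟩⟩u` and `⟨⟨y⟩⟩u'` fresh-equivalent
(`FreshOpEq`) if `u[x:=d] ≅ u'[y:=d]` for every atom `d` outside some finite world, and let `ExtRel`
be the compatible closure of such pairs. It is stable under substituting related values and,
observations being equivariant, under renaming a fresh atom. Configurations with related stacks
and foci then have the same termination behaviour: the two sides step in lockstep, except when
the first unbinds a fresh-equivalent pair to `u[x:=d]`; at that point fresh-equivalence, applied
to the remaining stack of the second side, lets it continue with `u'[y:=d]` instead. Hence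
`ExtRel` is contained in operational equivalence.

The hypothesis at the single atom `a''` transfers to every fresh atom by a swap, so the two
abstractions of the theorem are fresh-equivalent, up to one detail: a well-typed value may hide
free variables in dead `match` branches, which substitution would touch. Erasing them
(`Tm.closeAt`) gives an `ExtRel`-related, hence equivalent, value.
-/

namespace Tm

variable {σ : Sig}

theorem mapAtoms_comp (t : Tm σ) (f g : Atom → Atom) :
    (t.mapAtoms f).mapAtoms g = t.mapAtoms (g ∘ f) := by
  induction t <;> simp_all [mapAtoms]

theorem mapAtoms_id (t : Tm σ) : t.mapAtoms id = t := by
  induction t <;> simp_all [mapAtoms]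

theorem mapAtoms_congr (t : Tm σ) {f g : Atom → Atom} (h : ∀ a ∈ t.atoms, f a = g a) :
    t.mapAtoms f = t.mapAtoms g := by
  induction t with
  | case t br ih ihbr =>
    simp only [atoms, Finset.mem_union, Finset.mem_biUnion, Finset.mem_univ, true_and] at h
    simp only [mapAtoms, ih fun a ha => h a (.inl ha)]
    exact congrArg _ (funext fun c => ihbr c fun a ha => h a (.inr ⟨c, ha⟩))
  | obs o args ih =>
    simp only [atoms, Finset.mem_biUnion, Finset.mem_univ, true_and] at h
    simp only [mapAtoms]
    exact congrArg _ (funext fun i => ih i fun a ha => h a ⟨i, ha⟩)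
  | _ => simp_all [mapAtoms, atoms]

theorem mapAtoms_eq_self {t : Tm σ} {f : Atom → Atom} (h : ∀ a ∈ t.atoms, f a = a) :
    t.mapAtoms f = t :=
  (mapAtoms_congr t h).trans (mapAtoms_id t)

theorem atoms_mapAtoms (t : Tm σ) (f : Atom → Atom) :
    (t.mapAtoms f).atoms = t.atoms.image f := by
  induction t <;> simp_all [mapAtoms, atoms, Finset.image_union, Finset.biUnion_image]

theorem _root_.IsVal.mapAtoms {t : Tm σ} (h : IsVal t) (f : Atom → Atom) :
    IsVal (t.mapAtoms f) := by
  induction h <;> constructor <;> assumption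

theorem mapAtoms_renV (t : Tm σ) (r : ℕ → ℕ) (f : Atom → Atom) :
    (t.renV r).mapAtoms f = (t.mapAtoms f).renV r := by
  induction t generalizing r <;> simp_all [mapAtoms, renV]

theorem mapAtoms_ups (ρ : ℕ → Tm σ) (f : Atom → Atom) :
    (fun n => (ups ρ n).mapAtoms f) = ups (fun n => (ρ n).mapAtoms f) := by
  funext n
  cases n <;> simp [ups, mapAtoms, mapAtoms_renV]

theorem mapAtoms_subst (t : Tm σ) (ρ : ℕ → Tm σ) (f : Atom → Atom) :
    (t.subst ρ).mapAtoms f = (t.mapAtoms f).subst (fun n => (ρ n).mapAtoms f) := by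
  induction t generalizing ρ <;> simp_all [mapAtoms, subst, mapAtoms_ups]

theorem mapAtoms_subst1 (e v : Tm σ) (f : Atom → Atom) :
    (e.subst1 v).mapAtoms f = (e.mapAtoms f).subst1 (v.mapAtoms f) := by
  rw [subst1, subst1, mapAtoms_subst]
  congr 1
  funext n
  cases n <;> rfl

theorem mapAtoms_subst2 (e v u : Tm σ) (f : Atom → Atom) :
    (e.subst2 v u).mapAtoms f = (e.mapAtoms f).subst2 (v.mapAtoms f) (u.mapAtoms f) := by
  rw [subst2, subst2, mapAtoms_subst]
  congr 1
  funext n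
  rcases n with _ | _ | n <;> rfl

theorem mapAtoms_renameAtom (t : Tm σ) {f : Atom → Atom} (hf : Function.Injective f)
    (x y : Atom) : (t.renameAtom x y).mapAtoms f = (t.mapAtoms f).renameAtom (f x) (f y) := by
  rw [renameAtom, renameAtom, mapAtoms_comp, mapAtoms_comp]
  refine mapAtoms_congr t fun a _ => ?_
  by_cases h : a = x <;> simp [h, hf.ne]

theorem renameAtom_eq_mapAtoms_swap (t : Tm σ) {x y : Atom} (hy : y ∉ t.atoms) :
    t.renameAtom x y = t.mapAtoms (Equiv.swap x y) := by
  refine mapAtoms_congr t fun a ha => ?_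
  have hay : a ≠ y := by rintro rfl; exact hy ha
  by_cases h : a = x <;> simp [h, Equiv.swap_apply_of_ne_of_ne, hay]

theorem atoms_renameAtom_subset (t : Tm σ) (x y : Atom) :
    (t.renameAtom x y).atoms ⊆ insert y t.atoms := by
  rw [renameAtom, atoms_mapAtoms]
  intro a
  simp only [Finset.mem_image, Finset.mem_insert]
  rintro ⟨b, hb, rfl⟩
  by_cases h : b = x <;> simp [h, hb]

theorem atoms_renV (t : Tm σ) (r : ℕ → ℕ) : (t.renV r).atoms = t.atoms := by
  induction t generalizing r <;> simp_all [renV, atoms]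

theorem atoms_ups_subset {ρ : ℕ → Tm σ} {A : Finset Atom} (h : ∀ n, (ρ n).atoms ⊆ A) (n : ℕ) :
    (ups ρ n).atoms ⊆ A := by
  cases n <;> simp [ups, atoms, atoms_renV, h]

theorem atoms_subst_subset (t : Tm σ) {ρ : ℕ → Tm σ} {A : Finset Atom}
    (h : ∀ n, (ρ n).atoms ⊆ A) : (t.subst ρ).atoms ⊆ t.atoms ∪ A := by
  induction t generalizing ρ with
  | var n => exact (h n).trans Finset.subset_union_right
  | _ =>
    intro a
    have := atoms_ups_subset h
    have := atoms_ups_subset this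
    simp only [subst, atoms, Finset.mem_union, Finset.mem_biUnion, Finset.mem_univ, true_and] at *
    grind

theorem atoms_subst1_subset (e v : Tm σ) : (e.subst1 v).atoms ⊆ e.atoms ∪ v.atoms :=
  atoms_subst_subset e fun n => by cases n <;> simp [cons1, atoms]

theorem atoms_subst2_subset (e v u : Tm σ) :
    (e.subst2 v u).atoms ⊆ e.atoms ∪ (v.atoms ∪ u.atoms) :=
  atoms_subst_subset e fun n => by rcases n with _ | _ | n <;> simp [cons2, atoms]

theorem _root_.IsVal.renV {t : Tm σ} (h : IsVal t) (r : ℕ → ℕ) : IsVal (t.renV r) := by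
  induction h <;> constructor <;> assumption

theorem _root_.IsVal.subst {t : Tm σ} (h : IsVal t) {ρ : ℕ → Tm σ} (hρ : ∀ n, IsVal (ρ n)) :
    IsVal (t.subst ρ) := by
  induction h
  case var n => exact hρ n
  all_goals constructor <;> assumption

theorem isVal_ups {ρ : ℕ → Tm σ} (hρ : ∀ n, IsVal (ρ n)) (n : ℕ) : IsVal (ups ρ n) := by
  cases n
  exacts [.var, (hρ _).renV _]

/-- In a well-typed term, only dead `match` branches (which `HasTy.case` does not type) can contain
variables free below `k` binders; `closeAt k` replaces them by `unit`. -/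
def closeAt : ℕ → Tm σ → Tm σ
  | k, .var n => if n < k then .var n else .unit
  | _, .unit => .unit
  | k, .pair t₁ t₂ => .pair (closeAt k t₁) (closeAt k t₂)
  | k, .fn e => .fn (closeAt (k + 2) e)
  | k, .con c t => .con c (closeAt k t)
  | _, .atom a => .atom a
  | k, .bindv t₁ t₂ => .bindv (closeAt k t₁) (closeAt k t₂)
  | k, .lett e₁ e₂ => .lett (closeAt k e₁) (closeAt (k + 1) e₂)
  | k, .fst t => .fst (closeAt k t)
  | k, .snd t => .snd (closeAt k t)
  | k, .app t₁ t₂ => .app (closeAt k t₁) (closeAt k t₂)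
  | k, .case t br => .case (closeAt k t) (fun c => closeAt (k + 1) (br c))
  | _, .fresh => .fresh
  | k, .unbind t => .unbind (closeAt k t)
  | k, .obs o args => .obs o (fun i => closeAt k (args i))

theorem atoms_closeAt (k : ℕ) (t : Tm σ) : (closeAt k t).atoms = t.atoms := by
  induction t generalizing k <;> simp_all [closeAt, atoms]
  split_ifs <;> rfl

theorem _root_.IsVal.closeAt {t : Tm σ} (h : IsVal t) (k : ℕ) : IsVal (closeAt k t) := by
  induction h generalizing k
  case var n => unfold Tm.closeAt; split_ifs <;> constructor
  all_goals constructor <;> apply_assumption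

theorem mapAtoms_closeAt (k : ℕ) (t : Tm σ) (f : Atom → Atom) :
    (closeAt k t).mapAtoms f = closeAt k (t.mapAtoms f) := by
  induction t generalizing k <;> simp_all [closeAt, mapAtoms]
  split_ifs <;> rfl

theorem ups_eq_var {k : ℕ} {ρ : ℕ → Tm σ} (hρ : ∀ n < k, ρ n = .var n) :
    ∀ n < k + 1, ups ρ n = .var n
  | 0, _ => rfl
  | n + 1, hn => by simp [ups, hρ n (by omega), renV]

theorem subst_closeAt (k : ℕ) (t : Tm σ) {ρ : ℕ → Tm σ} (hρ : ∀ n < k, ρ n = .var n) :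
    (closeAt k t).subst ρ = closeAt k t := by
  induction t generalizing k ρ with
  | var n => unfold closeAt; split_ifs with h <;> simp [subst, hρ, h]
  | fn e ih => simp [subst, closeAt, ih _ (ups_eq_var (ups_eq_var hρ))]
  | lett e₁ e₂ ih₁ ih₂ => simp [subst, closeAt, ih₁ _ hρ, ih₂ _ (ups_eq_var hρ)]
  | case t br ih ihbr => simp [subst, closeAt, ih _ hρ, ihbr _ _ (ups_eq_var hρ)]
  | _ => simp_all [subst, closeAt]

theorem closeAt_closeAt (k : ℕ) (t : Tm σ) : (t.closeAt k).closeAt k = t.closeAt k := by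
  induction t generalizing k <;> simp_all [closeAt]
  split_ifs <;> simp_all [closeAt]

theorem ups_var (r : ℕ → ℕ) : ups (σ := σ) (fun n => .var (r n)) = fun n => .var (upr r n) := by
  funext n
  cases n <;> rfl

theorem renV_eq_subst (t : Tm σ) (r : ℕ → ℕ) : t.renV r = t.subst (fun n => .var (r n)) := by
  induction t generalizing r <;> simp_all [renV, subst, ups_var]

end Tm

section Numerals

variable {σ : Sig}

theorem isVal_numeral (m : ℕ) : IsVal (numeral σ m) := by
  induction m <;> constructor <;> first | assumption | constructor

theorem hasTy_numeral (m : ℕ) : HasTy σ [] (numeral σ m) (Ty.data σ.natD) := by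
  induction m with
  | zero =>
    have := HasTy.con (Γ := []) (c := σ.zeroC) IsVal.unit (σ.zeroArg ▸ HasTy.unit)
    rwa [σ.zeroRes] at this
  | succ m ih =>
    have := HasTy.con (Γ := []) (c := σ.succC) (isVal_numeral m) (σ.succArg ▸ ih)
    rwa [σ.succRes] at this

theorem atoms_numeral (m : ℕ) : (numeral σ m).atoms = ∅ := by
  induction m <;> simp_all [numeral, Tm.atoms]

theorem mapAtoms_numeral (m : ℕ) (f : Atom → Atom) : (numeral σ m).mapAtoms f = numeral σ m := by
  induction m <;> simp_all [numeral, Tm.mapAtoms]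

end Numerals

section Typing

variable {σ : Sig} {Γ : List (Ty σ.D)} {t : Tm σ} {τ : Ty σ.D}

theorem HasTy.append (h : HasTy σ Γ t τ) (Δ : List (Ty σ.D)) : HasTy σ (Γ ++ Δ) t τ := by
  induction h with
  | var Γ n τ hn =>
    exact .var _ n τ (List.getElem?_append_left (List.getElem?_eq_some_iff.mp hn).1 ▸ hn)
  | _ => constructor <;> assumption

theorem HasTy.of_nil (h : HasTy σ [] t τ) (Γ : List (Ty σ.D)) : HasTy σ Γ t τ :=
  h.append Γ

theorem HasTy.mapAtoms (h : HasTy σ Γ t τ) (f : Atom → Atom) : HasTy σ Γ (t.mapAtoms f) τ := by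
  induction h with
  | var Γ n τ hn => exact .var Γ n τ hn
  | obs o args hv _ ih => exact .obs o _ (fun i => (hv i).mapAtoms f) ih
  | _ => constructor <;> first | assumption | exact IsVal.mapAtoms ‹_› f

theorem HasTyStk.mapAtoms {S : Stk σ} {τ' : Ty σ.D} (h : HasTyStk σ Γ S τ τ') (f : Atom → Atom) :
    HasTyStk σ Γ (S.mapAtoms f) τ τ' := by
  induction h with
  | id => exact .id
  | cons he _ ih => exact .cons (he.mapAtoms f) ih

end Typing

namespace Stk

variable {σ : Sig}

theorem atoms_mapAtoms (S : Stk σ) (f : Atom → Atom) : (S.mapAtoms f).atoms = S.atoms.image f := by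
  induction S <;> simp_all [mapAtoms, atoms, Tm.atoms_mapAtoms, Finset.image_union]

theorem mapAtoms_comp (S : Stk σ) (f g : Atom → Atom) :
    (S.mapAtoms f).mapAtoms g = S.mapAtoms (g ∘ f) := by
  induction S <;> simp_all [mapAtoms, Tm.mapAtoms_comp]

theorem mapAtoms_id (S : Stk σ) : S.mapAtoms _root_.id = S := by
  induction S <;> simp_all [mapAtoms, Tm.mapAtoms_id]

end Stk

theorem finite_support_inv {π : Equiv.Perm Atom} (hπ : {a | π a ≠ a}.Finite) :
    {a | π⁻¹ a ≠ a}.Finite :=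
  hπ.subset fun _ ha h => ha (Equiv.Perm.inv_eq_iff_eq.mpr h.symm)

theorem finite_support_swap (x y : Atom) : {a | Equiv.swap x y a ≠ a}.Finite :=
  (Set.toFinite {x, y}).subset fun a ha => by
    by_contra h
    simp only [Set.mem_insert_iff, Set.mem_singleton_iff, not_or] at h
    exact ha (Equiv.swap_apply_of_ne_of_ne h.1 h.2)

theorem image_swap_subset_insert {W : Finset Atom} {d : Atom} (hd : d ∉ W) (z : Atom) :
    W.image (Equiv.swap z d) ⊆ insert d W := by
  intro b hb
  obtain ⟨a, ha, rfl⟩ := Finset.mem_image.mp hb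
  have had : a ≠ d := by rintro rfl; exact hd ha
  rw [Equiv.swap_apply_def]
  split_ifs with haz <;> simp_all

theorem image_swap_eq_self {W : Finset Atom} {d d' : Atom} (hd : d ∉ W) (hd' : d' ∉ W) :
    W.image (Equiv.swap d d') = W := by
  conv_rhs => rw [← Finset.image_id (s := W)]
  exact Finset.image_congr fun b hb => Equiv.swap_apply_of_ne_of_ne (by rintro rfl; exact hd hb)
    (by rintro rfl; exact hd' hb)

section Machine

variable {σ : Sig}

def Config.mapAtoms (c : Config σ) (f : Atom → Atom) : Config σ :=
  ⟨c.st.map f, c.stk.mapAtoms f, c.tm.mapAtoms f⟩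

theorem Config.mapAtoms_comp (c : Config σ) (f g : Atom → Atom) :
    (c.mapAtoms f).mapAtoms g = c.mapAtoms (g ∘ f) := by
  simp [Config.mapAtoms, Stk.mapAtoms_comp, Tm.mapAtoms_comp]

theorem Config.mapAtoms_id (c : Config σ) : c.mapAtoms id = c := by
  simp [Config.mapAtoms, Stk.mapAtoms_id, Tm.mapAtoms_id]

theorem Step.nodup {c c' : Config σ} (h : Step σ c c') (hnd : c.st.Nodup) : c'.st.Nodup := by
  cases h <;> simp_all [List.nodup_append] <;> rintro _ hb rfl <;> contradiction

theorem Step.perm (hequiv : ObsEquivariant σ) {π : Equiv.Perm Atom} (hπ : {a | π a ≠ a}.Finite)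
    {c c' : Config σ} (hnd : c.st.Nodup) (h : Step σ c c') :
    Step σ (c.mapAtoms π) (c'.mapAtoms π) := by
  have hfresh : ∀ {s : List Atom} {a : Atom}, a ∉ s → π a ∉ s.map π := fun ha hb =>
    ha (List.mem_map_of_injective π.injective |>.mp hb)
  cases h with
  | pop hv =>
    simpa [Config.mapAtoms, Stk.mapAtoms, Tm.mapAtoms_subst1] using Step.pop (hv.mapAtoms π)
  | lett => exact .lett
  | case br hv =>
    simpa [Config.mapAtoms, Tm.mapAtoms, Tm.mapAtoms_subst1] using .case _ (hv.mapAtoms π)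
  | fst hv₁ hv₂ => exact .fst (hv₁.mapAtoms π) (hv₂.mapAtoms π)
  | snd hv₁ hv₂ => exact .snd (hv₁.mapAtoms π) (hv₂.mapAtoms π)
  | app hv => simpa [Config.mapAtoms, Tm.mapAtoms, Tm.mapAtoms_subst2] using .app (hv.mapAtoms π)
  | fresh ha => simpa [Config.mapAtoms, Tm.mapAtoms] using .fresh (hfresh ha)
  | unbind ha hv =>
    simpa [Config.mapAtoms, Tm.mapAtoms, Tm.mapAtoms_renameAtom _ π.injective] using
      .unbind (hfresh ha) (hv.mapAtoms π)
  | obs o as hmem =>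
    rename_i s _
    have hval : σ.obsVal o s (List.ofFn as) = σ.obsVal o (s.map π) (List.ofFn (π ∘ as)) := by
      rw [← List.map_ofFn]
      exact hequiv π hπ o _ _ hnd (by simp) (by simpa using hmem)
    simpa [Config.mapAtoms, Tm.mapAtoms, mapAtoms_numeral, hval, Function.comp_def] using
      Step.obs o (fun i => π (as i)) (fun i => List.mem_map_of_mem (hmem i))

theorem TermN.perm (hequiv : ObsEquivariant σ) {π : Equiv.Perm Atom} (hπ : {a | π a ≠ a}.Finite)
    {c : Config σ} {n : ℕ} (h : TermN σ c n) (hnd : c.st.Nodup) : TermN σ (c.mapAtoms π) n := by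
  induction h with
  | val hv => exact .val (hv.mapAtoms π)
  | step hst _ ih => exact .step (hst.perm hequiv hπ hnd) (ih (hst.nodup hnd))

theorem term_mapAtoms_iff (hequiv : ObsEquivariant σ) {π : Equiv.Perm Atom}
    (hπ : {a | π a ≠ a}.Finite) {c : Config σ} (hnd : c.st.Nodup) :
    Term σ (c.mapAtoms π) ↔ Term σ c := by
  refine ⟨fun ⟨n, hn⟩ => ⟨n, ?_⟩, fun ⟨n, hn⟩ => ⟨n, hn.perm hequiv hπ hnd⟩⟩
  have := hn.perm hequiv (finite_support_inv hπ) (hnd.map π.injective)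
  rwa [Config.mapAtoms_comp, Equiv.Perm.inv_def, Equiv.symm_comp_self, Config.mapAtoms_id] at this

theorem Term.of_step {c c' : Config σ} (h : Step σ c c') : Term σ c' → Term σ c
  | ⟨n, hn⟩ => ⟨n + 1, .step h hn⟩

theorem term_cons_iff {s : List Atom} {S : Stk σ} {f v : Tm σ} (hv : IsVal v) :
    Term σ ⟨s, .cons S f, v⟩ ↔ Term σ ⟨s, S, f.subst1 v⟩ := by
  refine ⟨fun ⟨n, hn⟩ => ?_, Term.of_step (.pop hv)⟩
  rcases hn with _ | ⟨hst, hn⟩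
  cases hst <;> first | exact ⟨_, hn⟩ | cases hv

def Config.Wf (c : Config σ) : Prop :=
  c.st.Nodup ∧ c.stk.atoms ∪ c.tm.atoms ⊆ c.st.toFinset

theorem Step.wf {c c' : Config σ} (h : Step σ c c') (hc : c.Wf) : c'.Wf := by
  refine ⟨h.nodup hc.1, ?_⟩
  obtain ⟨-, hat⟩ := hc
  simp only [Finset.subset_iff, Finset.mem_union] at hat ⊢
  cases h with
  | @pop v _ _ e =>
    have := Tm.atoms_subst1_subset e v
    simp only [Finset.subset_iff, Finset.mem_union, Stk.atoms] at hat this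
    grind
  | @case v _ _ c br =>
    have := Tm.atoms_subst1_subset (br c) v
    simp only [Finset.subset_iff, Finset.mem_union, Tm.atoms, Finset.mem_biUnion] at hat this ⊢
    grind
  | @app v _ _ e =>
    have := Tm.atoms_subst2_subset e v (.fn e)
    simp only [Finset.subset_iff, Finset.mem_union, Tm.atoms] at hat this ⊢
    grind
  | @unbind _ d v _ a =>
    have := Tm.atoms_renameAtom_subset v a d
    simp only [Finset.subset_iff, Finset.mem_union, Finset.mem_insert, Tm.atoms,
      Finset.mem_singleton, List.mem_toFinset, List.mem_append, List.mem_singleton] at hat this ⊢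
    grind
  | _ => simp_all [Stk.atoms, Tm.atoms, atoms_numeral] <;> grind

theorem Config.Wf.notMem_tm_atoms {c : Config σ} (h : c.Wf) {d : Atom} (hd : d ∉ c.st) :
    d ∉ c.tm.atoms :=
  fun h' => hd (List.mem_toFinset.mp (h.2 (Finset.mem_union_right _ h')))

theorem toFinset_append_singleton (s : List Atom) (d : Atom) :
    (s ++ [d]).toFinset = insert d s.toFinset := by
  ext
  simp

end Machine

section OpEq

variable {σ : Sig} {w : Finset Atom} {e e' e'' : Tm σ} {τ : Ty σ.D}

theorem OpEq.symm (h : OpEq σ w e e' τ) : OpEq σ w e' e τ :=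
  ⟨by rw [Finset.union_comm]; exact h.1, h.2.2.1, h.2.1,
    fun s S τ' hs hw hS => (h.2.2.2 s S τ' hs hw hS).symm⟩

theorem OpEq.trans (h : OpEq σ w e e' τ) (h' : OpEq σ w e' e'' τ) : OpEq σ w e e'' τ :=
  ⟨Finset.union_subset (Finset.union_subset_left h.1) (Finset.union_subset_right h'.1), h.2.1,
    h'.2.2.1, fun s S τ' hs hw hS => (h.2.2.2 s S τ' hs hw hS).trans (h'.2.2.2 s S τ' hs hw hS)⟩

theorem OpEq.mapAtoms (hequiv : ObsEquivariant σ) {π : Equiv.Perm Atom}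
    (hπ : {a | π a ≠ a}.Finite) (h : OpEq σ w e e' τ) :
    OpEq σ (w.image π) (e.mapAtoms π) (e'.mapAtoms π) τ := by
  obtain ⟨hat, hty, hty', hterm⟩ := h
  refine ⟨?_, hty.mapAtoms π, hty'.mapAtoms π, fun s S τ' hs hw hS => ?_⟩
  · rw [Tm.atoms_mapAtoms, Tm.atoms_mapAtoms, ← Finset.image_union]
    exact Finset.image_subset_image hat
  have hinv : ⇑π⁻¹ ∘ ⇑π = id := funext fun a => by simp
  rw [← term_mapAtoms_iff hequiv (finite_support_inv hπ) hs,
    ← term_mapAtoms_iff hequiv (finite_support_inv hπ) (c := ⟨s, S, e'.mapAtoms π⟩) hs]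
  simp only [Config.mapAtoms, Tm.mapAtoms_comp, hinv, Tm.mapAtoms_id]
  refine hterm _ _ τ' (hs.map (π⁻¹).injective) ?_ (hS.mapAtoms _)
  have hmap : (s.map ⇑π⁻¹).toFinset = s.toFinset.image ⇑π⁻¹ := by ext; simp
  rw [Stk.atoms_mapAtoms, hmap, ← Finset.image_id (s := w), ← hinv,
    ← Finset.image_image, ← Finset.image_union]
  exact Finset.image_subset_image hw

theorem OpEq.renameAtom_of_fresh (hequiv : ObsEquivariant σ) {a a' d d' : Atom} {v v' : Tm σ}
    (hw : insert a (insert a' (v.atoms ∪ v'.atoms)) ⊆ w) (hd : d ∉ w) (hd' : d' ∉ w)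
    (h : OpEq σ (insert d w) (v.renameAtom a d) (v'.renameAtom a' d) τ) :
    OpEq σ (insert d' w) (v.renameAtom a d') (v'.renameAtom a' d') τ := by
  have hfix : ∀ b ∈ w, Equiv.swap d d' b = b := fun b hb =>
    Equiv.swap_apply_of_ne_of_ne (by rintro rfl; exact hd hb) (by rintro rfl; exact hd' hb)
  have := h.mapAtoms hequiv (finite_support_swap d d')
  rwa [Tm.mapAtoms_renameAtom _ (Equiv.injective _), Tm.mapAtoms_renameAtom _ (Equiv.injective _),
    Tm.mapAtoms_eq_self fun b hb => hfix b (hw (by simp [hb])),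
    Tm.mapAtoms_eq_self fun b hb => hfix b (hw (by simp [hb])), hfix a (hw (by simp)),
    hfix a' (hw (by simp)), Finset.image_insert, image_swap_eq_self hd hd',
    Equiv.swap_apply_left] at this

theorem OpEq.term_subst1_iff {v v' f : Tm σ} {τ₁ τ' : Ty σ.D} (h : OpEq σ w v v' τ)
    (hv : IsVal v) (hv' : IsVal v') (hf : HasTy σ [τ] f τ₁) {s : List Atom} {S : Stk σ}
    (hS : HasTyStk σ [] S τ₁ τ') (hs : s.Nodup) (hat : w ∪ S.atoms ∪ f.atoms ⊆ s.toFinset) :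
    Term σ ⟨s, S, f.subst1 v⟩ ↔ Term σ ⟨s, S, f.subst1 v'⟩ := by
  rw [← term_cons_iff hv, ← term_cons_iff hv']
  exact h.2.2.2 s (.cons S f) τ' hs (by rwa [Stk.atoms, ← Finset.union_assoc]) (.cons hf hS)

end OpEq

structure FreshOpEq (σ : Sig) (W : Finset Atom) (x y : Atom) (u u' : Tm σ) (τ : Ty σ.D) : Prop where
  isVal : IsVal u
  isVal' : IsVal u'
  closed : u.closeAt 0 = u
  closed' : u'.closeAt 0 = u'
  hasTy : HasTy σ [] u τ
  hasTy' : HasTy σ [] u' τ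
  opEq : ∃ w₀ ⊆ W, insert x (insert y (u.atoms ∪ u'.atoms)) ⊆ w₀ ∧
    ∀ d ∉ w₀, OpEq σ (insert d w₀) (u.renameAtom x d) (u'.renameAtom y d) τ

/-- As in `HasTy.case`, dead branches of a `match` are unconstrained, which is what lets
`extRel_closeAt` relate a term to its `closeAt`. -/
inductive ExtRel (σ : Sig) (W : Finset Atom) :
    List (Ty σ.D) → Tm σ → Tm σ → Ty σ.D → Prop where
  | var (Γ : List (Ty σ.D)) (n : ℕ) (τ : Ty σ.D) :
      Γ[n]? = some τ → ExtRel σ W Γ (Tm.var n) (Tm.var n) τ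
  | unit : ExtRel σ W Γ Tm.unit Tm.unit Ty.unit
  | pair : IsVal v₁ → IsVal v₂ → IsVal v₁' → IsVal v₂' →
      ExtRel σ W Γ v₁ v₁' τ₁ → ExtRel σ W Γ v₂ v₂' τ₂ →
      ExtRel σ W Γ (Tm.pair v₁ v₂) (Tm.pair v₁' v₂') (Ty.prod τ₁ τ₂)
  | fn : ExtRel σ W (τ :: Ty.arrow τ τ' :: Γ) e e' τ' →
      ExtRel σ W Γ (Tm.fn e) (Tm.fn e') (Ty.arrow τ τ')
  | con : IsVal v → IsVal v' → ExtRel σ W Γ v v' (σ.argTy c) →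
      ExtRel σ W Γ (Tm.con c v) (Tm.con c v') (Ty.data (σ.resTy c))
  | atom : ExtRel σ W Γ (Tm.atom a) (Tm.atom a) Ty.atm
  | bindv : IsVal v₁ → IsVal v₂ → IsVal v₁' → IsVal v₂' →
      ExtRel σ W Γ v₁ v₁' Ty.atm → ExtRel σ W Γ v₂ v₂' τ →
      ExtRel σ W Γ (Tm.bindv v₁ v₂) (Tm.bindv v₁' v₂') (Ty.bnd τ)
  | lett : ExtRel σ W Γ e₁ e₁' τ → ExtRel σ W (τ :: Γ) e₂ e₂' τ' →
      ExtRel σ W Γ (Tm.lett e₁ e₂) (Tm.lett e₁' e₂') τ'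
  | fst : IsVal v → IsVal v' → ExtRel σ W Γ v v' (Ty.prod τ₁ τ₂) →
      ExtRel σ W Γ (Tm.fst v) (Tm.fst v') τ₁
  | snd : IsVal v → IsVal v' → ExtRel σ W Γ v v' (Ty.prod τ₁ τ₂) →
      ExtRel σ W Γ (Tm.snd v) (Tm.snd v') τ₂
  | app : IsVal v₁ → IsVal v₂ → IsVal v₁' → IsVal v₂' →
      ExtRel σ W Γ v₁ v₁' (Ty.arrow τ τ') → ExtRel σ W Γ v₂ v₂' τ →
      ExtRel σ W Γ (Tm.app v₁ v₂) (Tm.app v₁' v₂') τ'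
  | case (br br' : σ.C → Tm σ) : IsVal v → IsVal v' → ExtRel σ W Γ v v' (Ty.data δ) →
      (∀ c, σ.resTy c = δ → ExtRel σ W (σ.argTy c :: Γ) (br c) (br' c) τ) →
      ExtRel σ W Γ (Tm.case v br) (Tm.case v' br') τ
  | fresh : ExtRel σ W Γ Tm.fresh Tm.fresh Ty.atm
  | unbind : IsVal v → IsVal v' → ExtRel σ W Γ v v' (Ty.bnd τ) →
      ExtRel σ W Γ (Tm.unbind v) (Tm.unbind v') (Ty.prod Ty.atm τ)
  | obs (o : σ.O) (args args' : Fin (σ.arity o) → Tm σ) :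
      (∀ i, IsVal (args i)) → (∀ i, IsVal (args' i)) →
      (∀ i, ExtRel σ W Γ (args i) (args' i) Ty.atm) →
      ExtRel σ W Γ (Tm.obs o args) (Tm.obs o args') (Ty.data σ.natD)
  | base : FreshOpEq σ W x y u u' τ →
      ExtRel σ W Γ (Tm.bindv (Tm.atom x) u) (Tm.bindv (Tm.atom y) u') (Ty.bnd τ)

section ExtRel

variable {σ : Sig} {W W' : Finset Atom} {Γ Δ : List (Ty σ.D)} {t t' : Tm σ} {τ : Ty σ.D}

theorem FreshOpEq.symm {x y : Atom} {u u' : Tm σ} (h : FreshOpEq σ W x y u u' τ) :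
    FreshOpEq σ W y x u' u τ := by
  obtain ⟨w₀, hw₀, hat, hop⟩ := h.opEq
  refine ⟨h.isVal', h.isVal, h.closed', h.closed, h.hasTy', h.hasTy, w₀, hw₀, ?_,
    fun d hd => (hop d hd).symm⟩
  rwa [Finset.insert_comm, Finset.union_comm]

theorem FreshOpEq.mono {x y : Atom} {u u' : Tm σ} (h : FreshOpEq σ W x y u u' τ) (hW : W ⊆ W') :
    FreshOpEq σ W' x y u u' τ :=
  { h with opEq := h.opEq.imp fun _ ⟨hw₀, rest⟩ => ⟨hw₀.trans hW, rest⟩ }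

theorem ExtRel.isVal (h : ExtRel σ W Γ t t' τ) (hv : IsVal t) : IsVal t' := by
  cases h <;> first
    | (constructor <;> first | assumption | constructor | exact ‹FreshOpEq ..›.isVal')
    | cases hv

theorem ExtRel.eq_of_atom {a : Atom} (h : ExtRel σ W Γ (.atom a) t τ) : t = .atom a := by
  cases h
  rfl

theorem ExtRel.symm (h : ExtRel σ W Γ t t' τ) : ExtRel σ W Γ t' t τ := by
  induction h with
  | base hp => exact .base hp.symm
  | _ => constructor <;> assumption

theorem ExtRel.mono (h : ExtRel σ W Γ t t' τ) (hW : W ⊆ W') : ExtRel σ W' Γ t t' τ := by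
  induction h with
  | base hp => exact .base (hp.mono hW)
  | _ => constructor <;> assumption

theorem ExtRel.refl (h : HasTy σ Γ t τ) : ExtRel σ W Γ t t τ := by
  induction h <;> constructor <;> assumption

theorem ExtRel.hasTy (h : ExtRel σ W Γ t t' τ) : HasTy σ Γ t τ := by
  induction h with
  | base hp => exact .bindv .atom hp.isVal .atom (hp.hasTy.of_nil _)
  | _ => constructor <;> assumption

theorem ExtRel.hasTy' (h : ExtRel σ W Γ t t' τ) : HasTy σ Γ t' τ :=
  h.symm.hasTy

theorem getElem?_upr {r : ℕ → ℕ} (hr : ∀ n τ', Γ[n]? = some τ' → Δ[r n]? = some τ')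
    (τ₀ : Ty σ.D) : ∀ n τ', (τ₀ :: Γ)[n]? = some τ' → (τ₀ :: Δ)[upr r n]? = some τ'
  | 0, _, h => h
  | n + 1, τ', h => hr n τ' h

theorem ExtRel.renV (h : ExtRel σ W Γ t t' τ) {r : ℕ → ℕ}
    (hr : ∀ n τ', Γ[n]? = some τ' → Δ[r n]? = some τ') :
    ExtRel σ W Δ (t.renV r) (t'.renV r) τ := by
  induction h generalizing Δ r with
  | var Γ n τ hn => exact .var _ _ _ (hr n τ hn)
  | fn _ ih => exact .fn (ih (getElem?_upr (getElem?_upr hr _) _))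
  | lett _ _ ih₁ ih₂ => exact .lett (ih₁ hr) (ih₂ (getElem?_upr hr _))
  | case br br' hv hv' _ _ ih ihbr =>
    exact .case _ _ (hv.renV r) (hv'.renV r) (ih hr) fun c hc => ihbr c hc (getElem?_upr hr _)
  | obs o args args' hv hv' _ ih =>
    exact .obs o _ _ (fun i => (hv i).renV r) (fun i => (hv' i).renV r) fun i => ih i hr
  | base hp =>
    simp only [Tm.renV]
    rw [← hp.closed, ← hp.closed', Tm.renV_eq_subst, Tm.renV_eq_subst,
      Tm.subst_closeAt 0 _ (by omega), Tm.subst_closeAt 0 _ (by omega), hp.closed, hp.closed']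
    exact .base hp
  | _ => constructor <;> first | exact IsVal.renV ‹_› r | (apply_assumption; exact hr)

theorem ExtRel.ups {ρ ρ' : ℕ → Tm σ}
    (hρ : ∀ n τ', Γ[n]? = some τ' → ExtRel σ W Δ (ρ n) (ρ' n) τ') (τ₀ : Ty σ.D) :
    ∀ n τ', (τ₀ :: Γ)[n]? = some τ' → ExtRel σ W (τ₀ :: Δ) (Tm.ups ρ n) (Tm.ups ρ' n) τ'
  | 0, _, h => .var _ 0 _ h
  | n + 1, τ', h => (hρ n τ' h).renV fun _ _ h => h

theorem ExtRel.subst (h : ExtRel σ W Γ t t' τ) {ρ ρ' : ℕ → Tm σ} (hv : ∀ n, IsVal (ρ n))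
    (hv' : ∀ n, IsVal (ρ' n)) (hρ : ∀ n τ', Γ[n]? = some τ' → ExtRel σ W Δ (ρ n) (ρ' n) τ') :
    ExtRel σ W Δ (t.subst ρ) (t'.subst ρ') τ := by
  induction h generalizing Δ ρ ρ' with
  | var Γ n τ hn => exact hρ n τ hn
  | fn _ ih =>
    exact .fn (ih (Tm.isVal_ups (Tm.isVal_ups hv)) (Tm.isVal_ups (Tm.isVal_ups hv'))
      (ExtRel.ups (ExtRel.ups hρ _) _))
  | lett _ _ ih₁ ih₂ =>
    exact .lett (ih₁ hv hv' hρ) (ih₂ (Tm.isVal_ups hv) (Tm.isVal_ups hv') (ExtRel.ups hρ _))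
  | case br br' hu hu' _ _ ih ihbr =>
    exact .case _ _ (hu.subst hv) (hu'.subst hv') (ih hv hv' hρ) fun c hc =>
      ihbr c hc (Tm.isVal_ups hv) (Tm.isVal_ups hv') (ExtRel.ups hρ _)
  | obs o args args' hu hu' _ ih =>
    exact .obs o _ _ (fun i => (hu i).subst hv) (fun i => (hu' i).subst hv') fun i => ih i hv hv' hρ
  | base hp =>
    simp only [Tm.subst]
    rw [← hp.closed, ← hp.closed', Tm.subst_closeAt 0 _ (by omega),
      Tm.subst_closeAt 0 _ (by omega), hp.closed, hp.closed']
    exact .base hp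
  | _ =>
    constructor <;> first
      | exact IsVal.subst ‹_› hv | exact IsVal.subst ‹_› hv' | (apply_assumption <;> assumption)

theorem ExtRel.subst1 {e e' v v' : Tm σ} {τ₁ : Ty σ.D} (he : ExtRel σ W [τ₁] e e' τ)
    (hv : ExtRel σ W [] v v' τ₁) (hval : IsVal v) :
    ExtRel σ W [] (e.subst1 v) (e'.subst1 v') τ := by
  refine he.subst (fun n => ?_) (fun n => ?_) fun n τ' h => ?_
  · cases n <;> first | exact hval | constructor
  · cases n <;> first | exact hv.isVal hval | constructor
  · rcases n with _ | n
    · exact Option.some_inj.mp h ▸ hv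
    · simp at h

theorem ExtRel.subst2 {e e' v v' : Tm σ} {τ₁ : Ty σ.D} (he : ExtRel σ W [τ₁, .arrow τ₁ τ] e e' τ)
    (hv : ExtRel σ W [] v v' τ₁) (hval : IsVal v) :
    ExtRel σ W [] (e.subst2 v (.fn e)) (e'.subst2 v' (.fn e')) τ := by
  refine he.subst (fun n => ?_) (fun n => ?_) fun n τ' h => ?_
  · rcases n with _ | _ | n <;> first | exact hval | constructor
  · rcases n with _ | _ | n <;> first | exact hv.isVal hval | constructor
  · rcases n with _ | _ | n
    · exact Option.some_inj.mp h ▸ hv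
    · exact Option.some_inj.mp h ▸ .fn he
    · simp at h

theorem FreshOpEq.mapAtoms (hequiv : ObsEquivariant σ) {π : Equiv.Perm Atom}
    (hπ : {a | π a ≠ a}.Finite) {x y : Atom} {u u' : Tm σ} (h : FreshOpEq σ W x y u u' τ) :
    FreshOpEq σ (W.image π) (π x) (π y) (u.mapAtoms π) (u'.mapAtoms π) τ := by
  obtain ⟨w₀, hw₀, hat, hop⟩ := h.opEq
  refine ⟨h.isVal.mapAtoms π, h.isVal'.mapAtoms π, by rw [← Tm.mapAtoms_closeAt, h.closed],
    by rw [← Tm.mapAtoms_closeAt, h.closed'], h.hasTy.mapAtoms π, h.hasTy'.mapAtoms π,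
    w₀.image π, Finset.image_subset_image hw₀, ?_, fun d hd => ?_⟩
  · simpa [Tm.atoms_mapAtoms, Finset.image_insert, Finset.image_union] using
      Finset.image_subset_image (f := π) hat
  · have hd₀ : π⁻¹ d ∉ w₀ := fun h => hd (Finset.mem_image.mpr ⟨_, h, by simp⟩)
    have := (hop _ hd₀).mapAtoms hequiv hπ
    simpa [Tm.mapAtoms_renameAtom _ π.injective, Finset.image_insert] using this

theorem ExtRel.mapAtoms (hequiv : ObsEquivariant σ) {π : Equiv.Perm Atom}
    (hπ : {a | π a ≠ a}.Finite) (h : ExtRel σ W Γ t t' τ) :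
    ExtRel σ (W.image π) Γ (t.mapAtoms π) (t'.mapAtoms π) τ := by
  induction h with
  | case br br' hu hu' _ _ ih ihbr =>
    exact .case _ _ (hu.mapAtoms π) (hu'.mapAtoms π) ih ihbr
  | obs o args args' hu hu' _ ih =>
    exact .obs o _ _ (fun i => (hu i).mapAtoms π) (fun i => (hu' i).mapAtoms π) ih
  | base hp => exact .base (hp.mapAtoms hequiv hπ)
  | _ => constructor <;> first | exact IsVal.mapAtoms ‹_› π | assumption

theorem ExtRel.renameAtom (hequiv : ObsEquivariant σ) (h : ExtRel σ W Γ t t' τ) {d : Atom}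
    (hd : d ∉ W) (ht : d ∉ t.atoms) (ht' : d ∉ t'.atoms) (z : Atom) :
    ExtRel σ (insert d W) Γ (t.renameAtom z d) (t'.renameAtom z d) τ := by
  rw [Tm.renameAtom_eq_mapAtoms_swap t ht, Tm.renameAtom_eq_mapAtoms_swap t' ht']
  exact (h.mapAtoms hequiv (finite_support_swap z d)).mono (image_swap_subset_insert hd z)

theorem extRel_closeAt (h : HasTy σ Γ t τ) : ExtRel σ W Γ t (t.closeAt Γ.length) τ := by
  induction h with
  | var Γ n τ hn =>
    have : n < Γ.length := (List.getElem?_eq_some_iff.mp hn).1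
    simpa [Tm.closeAt, this] using ExtRel.var Γ n τ hn
  | case br hv _ _ ih ihbr => exact .case _ _ hv (hv.closeAt _) ih ihbr
  | obs o args hv _ ih => exact .obs o _ _ hv (fun i => (hv i).closeAt _) ih
  | _ => constructor <;> first | assumption | exact IsVal.closeAt ‹_› _

end ExtRel

section Simulation

inductive ExtStk (σ : Sig) (W : Finset Atom) : Stk σ → Stk σ → Ty σ.D → Ty σ.D → Prop where
  | id : ExtStk σ W Stk.id Stk.id τ τ
  | cons : ExtRel σ W [τ] e e' τ' → ExtStk σ W S S' τ' τ'' →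
      ExtStk σ W (Stk.cons S e) (Stk.cons S' e') τ τ''

inductive ConfigRel (σ : Sig) : Config σ → Config σ → Prop where
  | mk : ExtStk σ s.toFinset S S' τ τ' → ExtRel σ s.toFinset [] e e' τ →
      ConfigRel σ ⟨s, S, e⟩ ⟨s, S', e'⟩

variable {σ : Sig} {W : Finset Atom} {τ τ' : Ty σ.D}

theorem ExtStk.mono {W' : Finset Atom} {S S' : Stk σ} (h : ExtStk σ W S S' τ τ') (hW : W ⊆ W') :
    ExtStk σ W' S S' τ τ' := by
  induction h with
  | id => exact .id
  | cons he _ ih => exact .cons (he.mono hW) ih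

theorem ExtStk.refl {S : Stk σ} (h : HasTyStk σ [] S τ τ') : ExtStk σ W S S τ τ' := by
  induction S generalizing τ with
  | id => cases h; exact .id
  | cons S e ih => cases h with | cons he hS => exact .cons (.refl he) (ih hS)

theorem ExtStk.hasTyStk' {S S' : Stk σ} (h : ExtStk σ W S S' τ τ') : HasTyStk σ [] S' τ τ' := by
  induction h with
  | id => exact .id
  | cons he _ ih => exact .cons he.hasTy' ih

theorem term_unbind_of_freshOpEq {s : List Atom} {S₁ S₂ : Stk σ} {x y d : Atom} {u u' : Tm σ}
    (hp : FreshOpEq σ s.toFinset x y u u' τ) (hS : ExtStk σ s.toFinset S₁ S₂ (.prod .atm τ) τ')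
    (hd : d ∉ s) (hwf₂ : Config.Wf ⟨s, S₂, .unbind (.bindv (.atom y) u')⟩)
    (hwf₁' : Config.Wf ⟨s ++ [d], S₁, .pair (.atom d) (u.renameAtom x d)⟩)
    (ih : ∀ c₂, c₂.Wf → ConfigRel σ ⟨s ++ [d], S₁, .pair (.atom d) (u.renameAtom x d)⟩ c₂ →
      Term σ c₂) :
    Term σ ⟨s, S₂, .unbind (.bindv (.atom y) u')⟩ := by
  obtain ⟨w₀, hw₀, -, hop⟩ := hp.opEq
  have hS₂ : S₂.atoms ⊆ insert d s.toFinset :=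
    (Finset.union_subset_left hwf₂.2).trans (Finset.subset_insert _ _)
  have hpair : HasTy σ [] (.pair (.atom d) (u.renameAtom x d)) (.prod .atm τ) :=
    .pair .atom (hp.isVal.mapAtoms _) .atom (hp.hasTy.mapAtoms _)
  have h₁ : Term σ ⟨s ++ [d], S₂, .pair (.atom d) (u.renameAtom x d)⟩ := by
    refine ih _ ⟨hwf₁'.1, Finset.union_subset ?_ (Finset.union_subset_right hwf₁'.2)⟩
      (.mk (hS.mono ?_) (.refl hpair))
    · rwa [toFinset_append_singleton]
    · exact toFinset_append_singleton s d ▸ Finset.subset_insert _ _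
  have hframe : HasTy σ [τ] (.pair (.atom d) (.var 0)) (.prod .atm τ) :=
    .pair .atom .var .atom (.var _ 0 _ rfl)
  have h₂ := (hop d fun h => hd (by simpa using hw₀ h)).term_subst1_iff (hp.isVal.mapAtoms _)
    (hp.isVal'.mapAtoms _) hframe hS.hasTyStk' hwf₁'.1 (by
      rw [toFinset_append_singleton]
      simp only [Tm.atoms, Finset.union_empty]
      exact Finset.union_subset (Finset.union_subset (Finset.insert_subset_insert _ hw₀) hS₂)
        (by simp))
  exact Term.of_step (.unbind hd hp.isVal') (h₂.mp h₁)

theorem ConfigRel.term_of_step (hequiv : ObsEquivariant σ) {c₁ c₁' c₂ : Config σ}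
    (hstep : Step σ c₁ c₁') (hrel : ConfigRel σ c₁ c₂) (hwf₁ : c₁.Wf) (hwf₂ : c₂.Wf)
    (ih : ∀ c₂', c₂'.Wf → ConfigRel σ c₁' c₂' → Term σ c₂') : Term σ c₂ := by
  have next : ∀ {c₂'}, Step σ c₂ c₂' → ConfigRel σ c₁' c₂' → Term σ c₂ := fun h hr =>
    Term.of_step h (ih _ (h.wf hwf₂) hr)
  obtain ⟨hS, he⟩ := hrel
  cases hstep with
  | pop hv => cases hS with
    | cons hf hS => exact next (.pop (he.isVal hv)) (.mk hS (hf.subst1 he hv))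
  | lett => cases he with
    | lett h₁ h₂ => exact next .lett (.mk (.cons h₂ hS) h₁)
  | case br hv => cases he with
    | case _ br' _ _ hc hbr => cases hc with
      | con hu hu' harg => exact next (.case br' hu') (.mk hS ((hbr _ rfl).subst1 harg hu))
  | fst => cases he with
    | fst _ _ hp => cases hp with
      | pair _ _ hv₁ hv₂ h₁ _ => exact next (.fst hv₁ hv₂) (.mk hS h₁)
  | snd => cases he with
    | snd _ _ hp => cases hp with
      | pair _ _ hv₁ hv₂ _ h₂ => exact next (.snd hv₁ hv₂) (.mk hS h₂)
  | app hv => cases he with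
    | app _ _ _ hv' hf harg => cases hf with
      | fn hbody => exact next (.app hv') (.mk hS (hbody.subst2 harg hv))
  | fresh hd => cases he with
    | fresh =>
      refine next (.fresh hd) (.mk (hS.mono ?_) .atom)
      exact toFinset_append_singleton _ _ ▸ Finset.subset_insert _ _
  | unbind hd hv => cases he with
    | unbind _ _ hb => cases hb with
      | bindv _ _ _ hv' ha hu =>
        obtain rfl := ha.eq_of_atom
        refine next (.unbind hd hv') (.mk (hS.mono ?_) (.pair .atom (hv.mapAtoms _) .atom
          (hv'.mapAtoms _) .atom ?_)) <;> rw [toFinset_append_singleton]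
        · exact Finset.subset_insert _ _
        · exact hu.renameAtom hequiv (by simpa using hd)
            (fun h => hwf₁.notMem_tm_atoms hd (by simp [Tm.atoms, h]))
            (fun h => hwf₂.notMem_tm_atoms hd (by simp [Tm.atoms, h])) _
      | base hp => exact term_unbind_of_freshOpEq hp hS hd hwf₂ ((Step.unbind hd hv).wf hwf₁) ih
  | obs o as hmem => cases he with
    | obs _ _ args' _ _ hargs =>
      obtain rfl : args' = fun i => .atom (as i) := funext fun i => (hargs i).eq_of_atom
      exact next (.obs o as hmem) (.mk hS (.refl (hasTy_numeral _)))

theorem ConfigRel.term (hequiv : ObsEquivariant σ) {c₁ : Config σ} {n : ℕ} (h : TermN σ c₁ n)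
    (hwf₁ : c₁.Wf) {c₂ : Config σ} (hwf₂ : c₂.Wf) (hrel : ConfigRel σ c₁ c₂) : Term σ c₂ := by
  induction h generalizing c₂ with
  | val hv =>
    obtain ⟨hS, he⟩ := hrel
    cases hS
    exact ⟨0, .val (he.isVal hv)⟩
  | step hst _ ih =>
    exact hrel.term_of_step hequiv hst hwf₁ hwf₂ fun _ hwf hr => ih (hst.wf hwf₁) hwf hr

theorem ExtRel.opEq (hequiv : ObsEquivariant σ) {W : Finset Atom} {e e' : Tm σ} {τ : Ty σ.D}
    (h : ExtRel σ W [] e e' τ) (hat : e.atoms ∪ e'.atoms ⊆ W) : OpEq σ W e e' τ := by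
  refine ⟨hat, h.hasTy, h.hasTy', fun s S τ' hs hsub hS => ?_⟩
  have hws : W ⊆ s.toFinset := Finset.union_subset_left hsub
  have hwf : ∀ {t : Tm σ}, t.atoms ⊆ W → Config.Wf ⟨s, S, t⟩ := fun ht =>
    ⟨hs, Finset.union_subset (Finset.union_subset_right hsub) (ht.trans hws)⟩
  have hwf₁ := hwf (Finset.union_subset_left hat)
  have hwf₂ := hwf (Finset.union_subset_right hat)
  have hS' : ExtStk σ s.toFinset S S τ τ' := .refl hS
  exact ⟨fun ⟨_, hn⟩ => ConfigRel.term hequiv hn hwf₁ hwf₂ (.mk hS' (h.mono hws)),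
    fun ⟨_, hn⟩ => ConfigRel.term hequiv hn hwf₂ hwf₁ (.mk hS' (h.symm.mono hws))⟩

end Simulation

section Extensionality

variable {σ : Sig} {w : Finset Atom} {τ : Ty σ.D} {a a' : Atom} {v v' : Tm σ}

theorem opEq_bindv_closeAt (hequiv : ObsEquivariant σ) (hv : IsVal v) (ht : HasTy σ [] v τ)
    (ha : a ∈ w) (hvw : v.atoms ⊆ w) :
    OpEq σ w (.bindv (.atom a) v) (.bindv (.atom a) (v.closeAt 0)) (.bnd τ) := by
  refine (ExtRel.bindv .atom hv .atom (hv.closeAt 0) .atom (extRel_closeAt ht)).opEq hequiv ?_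
  simp [Tm.atoms, Tm.atoms_closeAt, Finset.insert_subset_iff, ha, hvw]

theorem opEq_renameAtom_closeAt (hequiv : ObsEquivariant σ) (ht : HasTy σ [] v τ)
    (hvw : v.atoms ⊆ w) {d : Atom} (hd : d ∉ w) (a : Atom) :
    OpEq σ (insert d w) (v.renameAtom a d) ((v.closeAt 0).renameAtom a d) τ := by
  have hvw' : (v.closeAt 0).atoms ⊆ w := by rwa [Tm.atoms_closeAt]
  have hat : ∀ u : Tm σ, u.atoms ⊆ w → (u.renameAtom a d).atoms ⊆ insert d w := fun u hu =>
    (Tm.atoms_renameAtom_subset u a d).trans (Finset.insert_subset_insert d hu)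
  have hr := (extRel_closeAt (W := w) ht).renameAtom hequiv hd (fun h => hd (hvw h))
    (fun h => hd (hvw' h)) a
  exact hr.opEq hequiv (Finset.union_subset (hat v hvw) (hat _ hvw'))

theorem freshOpEq_closeAt (hequiv : ObsEquivariant σ) (hv : IsVal v) (hv' : IsVal v')
    (ht : HasTy σ [] v τ) (ht' : HasTy σ [] v' τ)
    (hw : insert a (insert a' (v.atoms ∪ v'.atoms)) ⊆ w)
    (h : ∀ d ∉ w, OpEq σ (insert d w) (v.renameAtom a d) (v'.renameAtom a' d) τ) :
    FreshOpEq σ w a a' (v.closeAt 0) (v'.closeAt 0) τ := by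
  have hvw : v.atoms ⊆ w := fun b hb => hw (by simp [hb])
  have hv'w : v'.atoms ⊆ w := fun b hb => hw (by simp [hb])
  refine ⟨hv.closeAt 0, hv'.closeAt 0, Tm.closeAt_closeAt 0 v, Tm.closeAt_closeAt 0 v',
    (extRel_closeAt (W := w) ht).hasTy', (extRel_closeAt (W := w) ht').hasTy', w, subset_rfl,
    by simpa [Tm.atoms_closeAt] using hw, fun d hd => ?_⟩
  exact (opEq_renameAtom_closeAt hequiv ht hvw hd a).symm.trans
    ((h d hd).trans (opEq_renameAtom_closeAt hequiv ht' hv'w hd a'))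

end Extensionality

/-- Proposition: extensionality for atom-binding, first half. -/
theorem ext_bind_1 (σ : Sig) (hequiv : ObsEquivariant σ)
    (τ : Ty σ.D) (w : Finset Atom) (a a' : Atom) (v v' : Tm σ)
    (hv : IsVal v) (hv' : IsVal v')
    (hw : insert a (insert a' (v.atoms ∪ v'.atoms)) ⊆ w)
    (ht : HasTy σ [] (Tm.bindv (Tm.atom a) v) (Ty.bnd τ))
    (ht' : HasTy σ [] (Tm.bindv (Tm.atom a') v') (Ty.bnd τ))
    (a'' : Atom) (ha'' : a'' ∉ w)
    (h : OpEq σ (insert a'' w) (v.renameAtom a a'') (v'.renameAtom a' a'') τ) :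
    OpEq σ w (Tm.bindv (Tm.atom a) v) (Tm.bindv (Tm.atom a') v') (Ty.bnd τ) := by
  have htv : HasTy σ [] v τ := by cases ht with | bindv _ _ _ h => exact h
  have htv' : HasTy σ [] v' τ := by cases ht' with | bindv _ _ _ h => exact h
  have hvw : v.atoms ⊆ w := fun b hb => hw (by simp [hb])
  have hv'w : v'.atoms ⊆ w := fun b hb => hw (by simp [hb])
  have hp : FreshOpEq σ w a a' (v.closeAt 0) (v'.closeAt 0) τ :=
    freshOpEq_closeAt hequiv hv hv' htv htv' hw fun d hd =>
      h.renameAtom_of_fresh hequiv hw ha'' hd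
  have hbase := (ExtRel.base (Γ := []) hp).opEq hequiv (by
    simp only [Tm.atoms, Tm.atoms_closeAt, Finset.insert_subset_iff, Finset.union_subset_iff,
      Finset.singleton_subset_iff] at hw ⊢
    tauto)
  exact (opEq_bindv_closeAt hequiv hv htv (hw (by simp)) hvw).trans
    (hbase.trans (opEq_bindv_closeAt hequiv hv' htv' (hw (by simp)) hv'w).symm)
end

section
/- (Type Safety: Progress) Write ⊢_w ⟨s,S,e⟩ : τ to mean atom(S) ∪ atom(e) ⊆ atom(s) = w and there is a type τ' with ∅ ⊢ S : τ' → τ and ∅ ⊢ e : τ'. If ⊢_w ⟨s,S,e⟩ : τ, then either S = Id and e is a value, or there exist s', S', e' with ⟨s,S,e⟩ ⟶ ⟨s',S',e'⟩. -/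
set_option autoImplicit true

section ProgressAux

variable {σ : Sig}

lemma canon_prod {v : Tm σ} {τ₁ τ₂ : Ty σ.D} (h : HasTy σ [] v (Ty.prod τ₁ τ₂))
    (hv : IsVal v) : ∃ v₁ v₂, v = Tm.pair v₁ v₂ ∧ IsVal v₁ ∧ IsVal v₂ := by
  cases h <;> first
    | (exact ⟨_, _, rfl, by assumption, by assumption⟩)
    | (cases hv <;> simp_all)

lemma canon_arrow {v : Tm σ} {τ₁ τ₂ : Ty σ.D} (h : HasTy σ [] v (Ty.arrow τ₁ τ₂))
    (hv : IsVal v) : ∃ e, v = Tm.fn e := by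
  cases h <;> first
    | exact ⟨_, rfl⟩
    | (cases hv <;> simp_all)

lemma canon_atm {v : Tm σ} (h : HasTy σ [] v Ty.atm)
    (hv : IsVal v) : ∃ a, v = Tm.atom a := by
  cases h <;> first
    | exact ⟨_, rfl⟩
    | (cases hv <;> simp_all)

lemma canon_data {v : Tm σ} {δ : σ.D} (h : HasTy σ [] v (Ty.data δ))
    (hv : IsVal v) : ∃ c v', v = Tm.con c v' ∧ IsVal v' := by
  cases h <;> first
    | (exact ⟨_, _, rfl, by assumption⟩)
    | (cases hv <;> simp_all)

lemma canon_bnd {v : Tm σ} {τ : Ty σ.D} (h : HasTy σ [] v (Ty.bnd τ))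
    (hv : IsVal v) : ∃ a v₂, v = Tm.bindv (Tm.atom a) v₂ ∧ IsVal v₂ := by
  cases h <;> first
    | (rename_i v₁ v₂ h1 h2 h3 h4
       obtain ⟨a, rfl⟩ := canon_atm h3 h1
       exact ⟨a, v₂, rfl, h2⟩)
    | (cases hv <;> simp_all)

end ProgressAux

/-- Type Safety: Progress. -/
theorem progress (σ : Sig) (w : Finset Atom) (c : Config σ) (τ : Ty σ.D)
    (h : ConfigTy σ w c τ) :
    (c.stk = Stk.id ∧ IsVal c.tm) ∨ ∃ c', Step σ c c' := by
  obtain ⟨hnd, hsub, hw, τ', hS, he⟩ := h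
  obtain ⟨s, S, e⟩ := c
  simp only at *
  -- helper for value case
  have valcase : ∀ {v : Tm σ}, IsVal v →
      (S = Stk.id ∧ IsVal v) ∨ ∃ c', Step σ ⟨s, S, v⟩ c' := by
    intro v hv
    cases S with
    | id => exact Or.inl ⟨rfl, hv⟩
    | cons S' e' => exact Or.inr ⟨_, Step.pop hv⟩
  cases he with
  | var _ n τ hn => simp at hn
  | unit => exact valcase IsVal.unit
  | pair h1 h2 h3 h4 => exact valcase (IsVal.pair h1 h2)
  | fn _ => exact valcase IsVal.fn
  | con h1 h2 => exact valcase (IsVal.con h1)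
  | atom => exact valcase IsVal.atom
  | bindv h1 h2 h3 h4 => exact valcase (IsVal.bindv h1 h2)
  | lett h1 h2 => exact Or.inr ⟨_, Step.lett⟩
  | fst hv ht =>
      obtain ⟨v₁, v₂, rfl, h1, h2⟩ := canon_prod ht hv
      exact Or.inr ⟨_, Step.fst h1 h2⟩
  | snd hv ht =>
      obtain ⟨v₁, v₂, rfl, h1, h2⟩ := canon_prod ht hv
      exact Or.inr ⟨_, Step.snd h1 h2⟩
  | app h1 h2 h3 h4 =>
      obtain ⟨e', rfl⟩ := canon_arrow h3 h1
      exact Or.inr ⟨_, Step.app h2⟩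
  | case br hv ht hbr =>
      obtain ⟨c, v', rfl, hv'⟩ := canon_data ht hv
      exact Or.inr ⟨_, Step.case br hv'⟩
  | fresh =>
      obtain ⟨a', ha'⟩ := Infinite.exists_notMem_finset s.toFinset
      rw [List.mem_toFinset] at ha'
      exact Or.inr ⟨_, Step.fresh ha'⟩
  | unbind hv ht =>
      obtain ⟨a, v₂, rfl, hv₂⟩ := canon_bnd ht hv
      obtain ⟨a', ha'⟩ := Infinite.exists_notMem_finset s.toFinset
      rw [List.mem_toFinset] at ha'
      exact Or.inr ⟨_, Step.unbind ha' hv₂⟩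
  | obs o args hvals htys =>
      have h : ∀ i, ∃ a, args i = Tm.atom a := fun i => canon_atm (htys i) (hvals i)
      choose as has using h
      have heq : args = fun i => Tm.atom (as i) := funext has
      subst heq
      have hmem : ∀ i, as i ∈ s := by
        intro i
        rw [← List.mem_toFinset]
        apply hsub
        apply Finset.mem_union_right
        simp only [Tm.atoms]
        exact Finset.mem_biUnion.mpr ⟨i, Finset.mem_univ i,
          by simp [Tm.atoms]⟩
      exact Or.inr ⟨_, Step.obs o as hmem⟩
end
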